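/- The composition cln = φ_ln ∘ 𝓛, where 𝓛: SPD(n) → Ch(n) is the Cholesky decomposition (S = 𝓛(S)·𝓛(S)ᵀ with 𝓛(S) lower triangular with positive diagonal) and φ_ln(L) = ⌊L⌋ + ln(𝔻(L)), is a bijection from SPD(n) onto the space of lower triangular n×n matrices. Consequently d(S₁,S₂) = ‖cln(S₁) − cln(S₂)‖_F is a metric on SPD(n) making it isometric to a Euclidean space. -/

import Mathlib

/-- A matrix is lower triangular if all entries strictly above the diagonal vanish. -/
def LowerTri {n : ℕ} (L : Matrix (Fin n) (Fin n) ℝ) : Prop :=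
  ∀ i j, i < j → L i j = 0

/-- `φ_ln(L) = ⌊L⌋ + ln(𝔻(L))`. -/
noncomputable def cholPhiLn {n : ℕ} (L : Matrix (Fin n) (Fin n) ℝ) :
    Matrix (Fin n) (Fin n) ℝ :=
  Matrix.of fun i j => if i = j then Real.log (L i j) else L i j

/-- The Frobenius norm of a real matrix. -/
noncomputable def frobNorm {n : ℕ} (A : Matrix (Fin n) (Fin n) ℝ) : ℝ :=
  Real.sqrt (∑ i, ∑ j, (A i j) ^ 2)

/-!
Positive definite `S` factor uniquely as `S = L Lᵀ` with `L` lower triangular with positive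
diagonal: existence comes from the LDL decomposition, uniqueness from the fact that a lower
triangular orthogonal matrix with positive diagonal is the identity. Since `exp` inverts `log`
on the positive diagonal, `φ_ln` is a bijection from such factors onto all lower triangular
matrices, so `cln` is injective on SPD(n) and pulls back the Euclidean (Frobenius) metric.
-/

open Matrix

theorem sign_mul_sign_of_ne_zero {K : Type*} [Ring K] [LinearOrder K] {x : K} (hx : x ≠ 0) :
    (SignType.sign x : K) * SignType.sign x = 1 := by
  rcases hx.lt_or_gt with h | h <;> simp [h]

namespace Matrix

variable {m : Type*} [Fintype m] [LinearOrder m]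

theorem IsLowerTriangular.mul_apply_self {R : Type*} [NonUnitalNonAssocSemiring R]
    {A B : Matrix m m R} (hA : A.IsLowerTriangular) (hB : B.IsLowerTriangular) (i : m) :
    (A * B) i i = A i i * B i i := by
  rw [mul_apply]
  refine Finset.sum_eq_single i (fun k _ hki => ?_) (by simp)
  rcases hki.lt_or_gt with hk | hk
  · rw [hB hk, mul_zero]
  · rw [hA hk, zero_mul]

theorem IsLowerTriangular.isUnit {K : Type*} [Field K] [DecidableEq m] {A : Matrix m m K}
    (hA : A.IsLowerTriangular) (hd : ∀ i, A i i ≠ 0) : IsUnit A := by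
  rw [isUnit_iff_isUnit_det, det_of_isLowerTriangular A hA, isUnit_iff_ne_zero]
  exact Finset.prod_ne_zero_iff.mpr fun i _ => hd i

section OrderedField

variable {K : Type*} [Field K] [LinearOrder K] [IsStrictOrderedRing K] [DecidableEq m]

/-- Its inverse `Aᵀ` is lower triangular too, so `A` is diagonal with `A i i ^ 2 = 1`. -/
theorem IsLowerTriangular.eq_one_of_mul_transpose_self {A : Matrix m m K}
    (hA : A.IsLowerTriangular) (hAA : A * Aᵀ = 1) (hd : ∀ i, 0 < A i i) : A = 1 := by
  have : Invertible A := invertibleOfRightInverse A Aᵀ hAA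
  have hAt : Aᵀ.IsLowerTriangular :=
    inv_eq_right_inv hAA ▸ blockTriangular_inv_of_blockTriangular hA
  have hdiag (i : m) : A i i = 1 := by
    have := hA.mul_apply_self hAt i
    rw [hAA, one_apply_eq, transpose_apply, eq_comm, mul_self_eq_one_iff] at this
    exact this.resolve_right fun h => by linarith [hd i]
  ext i j
  rcases lt_trichotomy i j with h | rfl | h
  · rw [hA h, one_apply_ne h.ne]
  · rw [hdiag, one_apply_eq]
  · rw [← transpose_apply A j i, hAt h, one_apply_ne h.ne']

/-- `L₂⁻¹ L₁` is lower triangular, orthogonal and has positive diagonal. -/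
theorem IsLowerTriangular.eq_of_mul_transpose_eq {L₁ L₂ : Matrix m m K}
    (h₁ : L₁.IsLowerTriangular) (hd₁ : ∀ i, 0 < L₁ i i)
    (h₂ : L₂.IsLowerTriangular) (hd₂ : ∀ i, 0 < L₂ i i)
    (h : L₁ * L₁ᵀ = L₂ * L₂ᵀ) : L₁ = L₂ := by
  have : Invertible L₂ := (h₂.isUnit fun i => (hd₂ i).ne').invertible
  set A := L₂⁻¹ * L₁
  have hL₁ : L₂ * A = L₁ := mul_inv_cancel_left_of_invertible L₂ L₁
  have hA : A.IsLowerTriangular := (blockTriangular_inv_of_blockTriangular h₂).mul h₁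
  have hAA : A * Aᵀ = 1 := by
    rw [transpose_mul, Matrix.mul_assoc, ← Matrix.mul_assoc L₁, h, Matrix.mul_assoc,
      ← Matrix.mul_assoc L₂⁻¹, inv_mul_of_invertible, Matrix.one_mul, ← transpose_mul,
      inv_mul_of_invertible, transpose_one]
  have hdA (i : m) : 0 < A i i := by
    have := hd₁ i
    rw [← hL₁, h₂.mul_apply_self hA] at this
    exact pos_of_mul_pos_right this (hd₂ i).le
  rw [← hL₁, hA.eq_one_of_mul_transpose_self hAA hdA, Matrix.mul_one]

/-- Flip the signs of the columns with negative diagonal entry. -/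
theorem IsLowerTriangular.exists_diag_pos_mul_transpose_eq {L : Matrix m m K}
    (hL : L.IsLowerTriangular) (hd : ∀ i, L i i ≠ 0) :
    ∃ L' : Matrix m m K,
      L'.IsLowerTriangular ∧ (∀ i, 0 < L' i i) ∧ L' * L'ᵀ = L * Lᵀ := by
  set D := diagonal fun i => (SignType.sign (L i i) : K)
  have hDD : D * Dᵀ = 1 := by
    rw [diagonal_transpose, diagonal_mul_diagonal, ← diagonal_one]
    exact congrArg diagonal (funext fun i => sign_mul_sign_of_ne_zero (hd i))
  refine ⟨L * D, hL.mul (blockTriangular_diagonal _), fun i => ?_, ?_⟩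
  · rw [mul_diagonal, self_mul_sign]
    exact abs_pos.mpr (hd i)
  · rw [transpose_mul, Matrix.mul_assoc, ← Matrix.mul_assoc D, hDD, Matrix.one_mul]

end OrderedField

/-- The Cholesky factor is `L √D` for the LDL decomposition `S = L D Lᵀ`, up to the signs of
the columns. -/
theorem PosDef.exists_isLowerTriangular_mul_transpose [WellFoundedLT m]
    [LocallyFiniteOrderBot m] {S : Matrix m m ℝ} (hS : S.PosDef) :
    ∃ L : Matrix m m ℝ, L.IsLowerTriangular ∧ (∀ i, 0 < L i i) ∧ S = L * Lᵀ := by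
  classical
  have hdiag : ∀ i, 0 < LDL.diagEntries hS i := by
    have : (LDL.diag hS).PosDef := by
      rw [LDL.diag_eq_lowerInv_conj]
      exact hS.mul_mul_conjTranspose_same
        (vecMul_injective_of_isUnit (isUnit_of_invertible _))
    exact posDef_diagonal_iff.mp this
  set L := LDL.lower hS * diagonal fun i => √(LDL.diagEntries hS i) with hL_def
  have hS_eq : S = L * Lᵀ := by
    conv_lhs => rw [← LDL.lower_conj_diag hS]
    have hsqrt : (fun i => √(LDL.diagEntries hS i) * √(LDL.diagEntries hS i)) =
        LDL.diagEntries hS := funext fun i => Real.mul_self_sqrt (hdiag i).le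
    rw [hL_def, transpose_mul, diagonal_transpose, Matrix.mul_assoc, Matrix.mul_assoc,
      ← Matrix.mul_assoc (diagonal _) (diagonal _), diagonal_mul_diagonal, hsqrt, ← LDL.diag,
      conjTranspose_eq_transpose_of_trivial]
  have hLinv : (LDL.lowerInv hS).IsLowerTriangular := fun _ _ h => LDL.lowerInv_triangular hS h
  have hL : L.IsLowerTriangular :=
    (blockTriangular_inv_of_blockTriangular hLinv).mul (blockTriangular_diagonal _)
  have hdet : L.det ≠ 0 := fun h0 => by
    have := hS.det_pos
    rw [hS_eq, det_mul, det_transpose, h0, mul_zero] at this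
    exact this.false
  rw [det_of_isLowerTriangular L hL, Finset.prod_ne_zero_iff] at hdet
  obtain ⟨L', hL', hd', hLL'⟩ :=
    hL.exists_diag_pos_mul_transpose_eq fun i => hdet i (Finset.mem_univ i)
  exact ⟨L', hL', hd', hLL'.symm ▸ hS_eq⟩

theorem IsLowerTriangular.posDef_mul_transpose {L : Matrix m m ℝ} (hL : L.IsLowerTriangular)
    (hd : ∀ i, 0 < L i i) : (L * Lᵀ).PosDef := by
  classical
  rw [← conjTranspose_eq_transpose_of_trivial]
  exact PosDef.mul_conjTranspose_self L
    (vecMul_injective_of_isUnit (hL.isUnit fun i => (hd i).ne'))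

variable [WellFoundedLT m] [LocallyFiniteOrderBot m]

open scoped Classical in
/-- The Cholesky factor of a positive definite matrix, and `0` for any other matrix. -/
noncomputable def cholesky (S : Matrix m m ℝ) : Matrix m m ℝ :=
  if hS : S.PosDef then hS.exists_isLowerTriangular_mul_transpose.choose else 0

theorem PosDef.cholesky_spec {S : Matrix m m ℝ} (hS : S.PosDef) :
    (cholesky S).IsLowerTriangular ∧ (∀ i, 0 < cholesky S i i) ∧
      S = cholesky S * (cholesky S)ᵀ := by
  rw [cholesky, dif_pos hS]
  exact hS.exists_isLowerTriangular_mul_transpose.choose_spec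

theorem IsLowerTriangular.cholesky_mul_transpose {L : Matrix m m ℝ} (hL : L.IsLowerTriangular)
    (hd : ∀ i, 0 < L i i) : cholesky (L * Lᵀ) = L := by
  obtain ⟨hlow, hpos, hfac⟩ := (hL.posDef_mul_transpose hd).cholesky_spec
  exact hlow.eq_of_mul_transpose_eq hpos hL hd hfac.symm

end Matrix

variable {n : ℕ}

theorem lowerTri_iff_isLowerTriangular {L : Matrix (Fin n) (Fin n) ℝ} :
    LowerTri L ↔ L.IsLowerTriangular :=
  Iff.rfl

noncomputable def cholPhiExp (X : Matrix (Fin n) (Fin n) ℝ) : Matrix (Fin n) (Fin n) ℝ :=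
  Matrix.of fun i j => if i = j then Real.exp (X i j) else X i j

theorem cholPhiExp_apply_self_pos (X : Matrix (Fin n) (Fin n) ℝ) (i : Fin n) :
    0 < cholPhiExp X i i := by
  simpa [cholPhiExp] using Real.exp_pos (X i i)

theorem LowerTri.cholPhiExp {X : Matrix (Fin n) (Fin n) ℝ} (hX : LowerTri X) :
    LowerTri (cholPhiExp X) := fun i j hij => by
  simpa [_root_.cholPhiExp, hij.ne] using hX i j hij

theorem LowerTri.cholPhiLn {L : Matrix (Fin n) (Fin n) ℝ} (hL : LowerTri L) :
    LowerTri (cholPhiLn L) := fun i j hij => by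
  simpa [_root_.cholPhiLn, hij.ne] using hL i j hij

theorem cholPhiLn_cholPhiExp (X : Matrix (Fin n) (Fin n) ℝ) : cholPhiLn (cholPhiExp X) = X := by
  ext i j
  by_cases hij : i = j <;> simp [cholPhiLn, cholPhiExp, hij]

theorem cholPhiExp_cholPhiLn {L : Matrix (Fin n) (Fin n) ℝ} (hd : ∀ i, 0 < L i i) :
    cholPhiExp (cholPhiLn L) = L := by
  ext i j
  by_cases hij : i = j
  · subst hij
    simp [cholPhiLn, cholPhiExp, Real.exp_log (hd i)]
  · simp [cholPhiLn, cholPhiExp, hij]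

theorem bijOn_cholPhiLn_cholesky :
    Set.BijOn (fun S => cholPhiLn (cholesky S)) {S : Matrix (Fin n) (Fin n) ℝ | S.PosDef}
      {X | LowerTri X} := by
  refine ⟨fun S hS => (lowerTri_iff_isLowerTriangular.mpr hS.cholesky_spec.1).cholPhiLn,
    fun S₁ hS₁ S₂ hS₂ h => ?_, fun X hX => ?_⟩
  · obtain ⟨-, hd₁, hS₁_eq⟩ := PosDef.cholesky_spec hS₁
    obtain ⟨-, hd₂, hS₂_eq⟩ := PosDef.cholesky_spec hS₂
    have hchol := congrArg cholPhiExp h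
    simp only [cholPhiExp_cholPhiLn hd₁, cholPhiExp_cholPhiLn hd₂] at hchol
    rw [hS₁_eq, hS₂_eq, hchol]
  · have hL := lowerTri_iff_isLowerTriangular.mp hX.cholPhiExp
    have hd := cholPhiExp_apply_self_pos X
    refine ⟨cholPhiExp X * (cholPhiExp X)ᵀ, hL.posDef_mul_transpose hd, ?_⟩
    simp only [hL.cholesky_mul_transpose hd, cholPhiLn_cholPhiExp]

section Frobenius

attribute [local instance] Matrix.frobeniusNormedAddCommGroup

theorem frobNorm_eq_norm (A : Matrix (Fin n) (Fin n) ℝ) : frobNorm A = ‖A‖ := by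
  simp only [frobNorm, frobenius_norm_def, Real.norm_eq_abs, Real.rpow_two, sq_abs,
    Real.sqrt_eq_rpow]

theorem exists_metricSpace_dist_eq_frobNorm_sub {α : Type*} {f : α → Matrix (Fin n) (Fin n) ℝ}
    (hf : Function.Injective f) :
    ∃ d : MetricSpace α, ∀ a b, d.dist a b = frobNorm (f a - f b) :=
  ⟨MetricSpace.induced f hf inferInstance, fun a b =>
    (dist_eq_norm (f a) (f b)).trans (frobNorm_eq_norm _).symm⟩

end Frobenius

open Matrix in
/-- With `𝓛` the Cholesky decomposition (`S = 𝓛(S)·𝓛(S)ᵀ`, `𝓛(S)` lower triangular with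
positive diagonal), the map `cln = φ_ln ∘ 𝓛` is a bijection from SPD(n) onto the lower
triangular matrices, and `d(S₁,S₂) = ‖cln S₁ − cln S₂‖_F` is a metric on SPD(n), making it
isometric to a Euclidean space. -/
theorem log_cholesky_bijective_and_metric (n : ℕ) :
    ∃ chol : Matrix (Fin n) (Fin n) ℝ → Matrix (Fin n) (Fin n) ℝ,
      (∀ S : Matrix (Fin n) (Fin n) ℝ, S.PosDef →
        LowerTri (chol S) ∧ (∀ i, 0 < chol S i i) ∧ S = chol S * (chol S)ᵀ) ∧
      Set.BijOn (fun S => cholPhiLn (chol S)) {S : Matrix (Fin n) (Fin n) ℝ | S.PosDef}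
        {X : Matrix (Fin n) (Fin n) ℝ | LowerTri X} ∧
      ∃ m : MetricSpace {S : Matrix (Fin n) (Fin n) ℝ // S.PosDef},
        ∀ S₁ S₂ : {S : Matrix (Fin n) (Fin n) ℝ // S.PosDef},
          m.dist S₁ S₂ = frobNorm (cholPhiLn (chol (S₁ : Matrix (Fin n) (Fin n) ℝ)) -
            cholPhiLn (chol (S₂ : Matrix (Fin n) (Fin n) ℝ))) :=
  ⟨cholesky, fun _ hS => hS.cholesky_spec, bijOn_cholPhiLn_cholesky,
    exists_metricSpace_dist_eq_frobNorm_sub bijOn_cholPhiLn_cholesky.injOn.injective⟩
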